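/- arXiv:2201.09276 — 2 statements merged into one kernel-verified Lean document; each statement's English description precedes it below -/
import Mathlib

section
/- Let R be a commutative local ring in which 2 is invertible, and let A ∈ M₂(R). Then A is strongly rad-clean if and only if A ∈ GL₂(R), or A ∈ J(M₂(R)), or tr(A) ∈ U(R), det(A) ∈ J(R), and tr(A)² − 4det(A) is a square in R. -/
/-- `j` lies in the Jacobson radical of the corner ring `eSe` (with identity `e`):
every element of the form `e - (eye)·j` is invertible in the corner ring. -/
def MemCornerJacobson {S : Type*} [Ring S] (e j : S) : Prop :=
  ∀ y : S, ∃ s : S,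
    e * s * e = s ∧ s * (e - e * y * e * j) = e ∧ (e - e * y * e * j) * s = e

/-- `a` is strongly rad-clean: `a = e + u` with `e` idempotent, `u` a unit,
`ae = ea` and `eae ∈ J(eSe)`. -/
def IsStronglyRadClean {S : Type*} [Ring S] (a : S) : Prop :=
  ∃ e : S, IsIdempotentElem e ∧ IsUnit (a - e) ∧ a * e = e * a ∧
    MemCornerJacobson e (e * a * e)

/-!
An idempotent `e` of `M₂(R)` over a local ring is `0`, `1`, or has trace `1` and determinant `0`.
With `e = 0` strong rad-cleanness of `A` says that `A` is a unit; with `e = 1` it says that `1 - yA`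
is a unit for every `y`, i.e. `A ∈ J(M₂(R)) = M₂(J(R))`. A matrix commuting with an idempotent `e`
of trace `1` and determinant `0` is `ae + b(1 - e)`, with `tr A = a + b` and `det A = ab`, and the
remaining conditions say exactly that `a ∈ J(R)` and `b` is a unit. Conversely, when `2` is
invertible the quadratic formula turns a square root of the discriminant into such roots `a`, `b`
of the characteristic polynomial, and `e = (A - b)/(a - b)` is an idempotent with
`A = ae + b(1 - e)`.
-/

open Matrix IsLocalRing

section Ring

variable {S : Type*} [Ring S]

theorem memCornerJacobson_of_forall_isUnit {e j : S} (he : IsIdempotentElem e) (hj : j * e = j)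
    (h : ∀ y, IsUnit (1 - e * y * e * j)) : MemCornerJacobson e j := by
  intro y
  obtain ⟨u, hu⟩ := h y
  have hex : e * (e * y * e) = e * y * e := by simp only [← mul_assoc, he.eq]
  have hleft : e - e * y * e * j = e * u := by rw [hu, mul_sub, mul_one, ← mul_assoc, hex]
  have hright : e - e * y * e * j = u * e := by
    rw [hu, sub_mul, one_mul, mul_assoc _ j, hj]
  have hue : e * u = u * e := hleft.symm.trans hright
  have hev : e * ↑u⁻¹ = ↑u⁻¹ * e := Commute.units_inv_right hue
  refine ⟨↑u⁻¹ * e, ?_, ?_, ?_⟩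
  · calc e * (↑u⁻¹ * e) * e = e * ↑u⁻¹ * (e * e) := by simp only [mul_assoc]
      _ = ↑u⁻¹ * e := by rw [he.eq, hev, mul_assoc, he.eq]
  · calc ↑u⁻¹ * e * (e - e * y * e * j) = ↑u⁻¹ * (e * u) * e := by
          rw [hright]; simp only [mul_assoc]
      _ = e := by rw [hue, ← mul_assoc, Units.inv_mul, one_mul, he.eq]
  · calc (e - e * y * e * j) * (↑u⁻¹ * e) = u * (e * ↑u⁻¹) * e := by
          rw [hright]; simp only [mul_assoc]
      _ = e := by rw [hev, ← mul_assoc, Units.mul_inv, one_mul, he.eq]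

theorem memCornerJacobson_one_iff {j : S} : MemCornerJacobson 1 j ↔ ∀ y, IsUnit (1 - y * j) := by
  refine ⟨fun h y => ?_, fun h => memCornerJacobson_of_forall_isUnit .one (mul_one j)
    (by simpa only [one_mul, mul_one] using h)⟩
  obtain ⟨s, -, hs, hs'⟩ := h y
  simp only [one_mul, mul_one] at hs hs'
  exact ⟨⟨_, s, hs', hs⟩, rfl⟩

theorem IsUnit.isStronglyRadClean {a : S} (ha : IsUnit a) : IsStronglyRadClean a :=
  ⟨0, .zero, by simpa using ha, by simp, fun _ => ⟨0, by simp⟩⟩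

theorem isStronglyRadClean_of_forall_isUnit_one_sub_mul {a : S} (h : ∀ y, IsUnit (1 - y * a)) :
    IsStronglyRadClean a :=
  ⟨1, .one, by simpa using (h 1).neg, by simp,
    by simpa only [one_mul, mul_one] using memCornerJacobson_one_iff.2 h⟩

end Ring

section Algebra

variable {R S : Type*} [CommRing R] [Ring S] [Algebra R S] {e : S}

theorem IsIdempotentElem.isUnit_smul_add_smul_one_sub (he : IsIdempotentElem e) {a b : R}
    (ha : IsUnit a) (hb : IsUnit b) : IsUnit (a • e + b • (1 - e)) := by
  have key : ∀ {x y z w : R}, (x • e + y • (1 - e)) * (z • e + w • (1 - e)) =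
      (x * z) • e + (y * w) • (1 - e) := by
    intro x y z w
    simp only [add_mul, mul_add, smul_mul_smul_comm, he.eq, he.mul_one_sub_self,
      he.one_sub_mul_self, he.one_sub.eq, smul_zero, add_zero, zero_add]
  refine ⟨⟨_, (↑ha.unit⁻¹ : R) • e + (↑hb.unit⁻¹ : R) • (1 - e), ?_, ?_⟩, rfl⟩ <;>
    simp [key]

theorem IsIdempotentElem.isStronglyRadClean_smul_add_smul_one_sub (he : IsIdempotentElem e)
    {a b : R} (ha : IsUnit (a - 1)) (hb : IsUnit b) (haJ : ∀ x : S, IsUnit (1 - a • x)) :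
    IsStronglyRadClean (a • e + b • (1 - e)) := by
  have hAe : (a • e + b • (1 - e)) * e = a • e := by
    simp [add_mul, he.eq, he.one_sub_mul_self]
  have heA : e * (a • e + b • (1 - e)) = a • e := by
    simp [mul_add, he.eq, he.mul_one_sub_self]
  refine ⟨e, he, ?_, hAe.trans heA.symm, ?_⟩
  · convert he.isUnit_smul_add_smul_one_sub ha hb using 1
    module
  · rw [heA, smul_mul_assoc, he.eq]
    refine memCornerJacobson_of_forall_isUnit he (by rw [smul_mul_assoc, he.eq]) fun y => ?_
    rw [mul_smul_comm, mul_assoc _ e e, he.eq]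
    exact haJ _

theorem exists_isIdempotentElem_eq_smul_add_smul_one_sub {A : S} {a b : R}
    (hA : (A - a • 1) * (A - b • 1) = 0) (hab : IsUnit (a - b)) :
    ∃ e : S, IsIdempotentElem e ∧ A = a • e + b • (1 - e) := by
  obtain ⟨c, hc⟩ := hab.exists_left_inv
  set N := A - b • (1 : S)
  have hN : N * N = (a - b) • N := by
    have : A - a • (1 : S) = N - (a - b) • 1 := by simp only [N]; module
    rw [this, sub_mul, smul_mul_assoc, one_mul, sub_eq_zero] at hA
    exact hA
  refine ⟨c • N, ?_, ?_⟩
  · rw [IsIdempotentElem, smul_mul_smul_comm, hN, smul_smul, mul_assoc, hc, mul_one]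
  · calc A = N + b • 1 := (sub_add_cancel A _).symm
      _ = ((a - b) * c) • N + b • 1 := by rw [mul_comm, hc, one_smul]
      _ = a • c • N + b • (1 - c • N) := by module

end Algebra

theorem IsLocalRing.eq_zero_or_eq_one_of_isIdempotentElem {R : Type*} [CommRing R] [IsLocalRing R]
    {x : R} (hx : IsIdempotentElem x) : x = 0 ∨ x = 1 := by
  rcases isUnit_or_isUnit_one_sub_self x with h | h
  · exact .inr ((IsIdempotentElem.iff_eq_one_of_isUnit h).1 hx)
  · exact .inl (by simpa using (IsIdempotentElem.iff_eq_one_of_isUnit h).1 hx.one_sub)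

section LocalRing

variable {R : Type*} [CommRing R] [IsLocalRing R]

theorem IsLocalRing.isUnit_add_of_mem_maximalIdeal {a b : R} (ha : a ∈ maximalIdeal R)
    (hb : IsUnit b) : IsUnit (a + b) :=
  notMem_maximalIdeal.1 fun h => notMem_maximalIdeal.2 hb (by simpa using sub_mem h ha)

theorem IsLocalRing.exists_mem_maximalIdeal_isUnit_add_mul_iff (h2 : IsUnit (2 : R)) {t d : R} :
    (∃ a ∈ maximalIdeal R, ∃ b, IsUnit b ∧ t = a + b ∧ d = a * b) ↔
      IsUnit t ∧ d ∈ maximalIdeal R ∧ ∃ u, t ^ 2 - 4 * d = u ^ 2 := by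
  constructor
  · rintro ⟨a, ha, b, hb, rfl, rfl⟩
    exact ⟨isUnit_add_of_mem_maximalIdeal ha hb, Ideal.mul_mem_right _ _ ha, a - b, by ring⟩
  rintro ⟨ht, hd, u, hu⟩
  obtain ⟨c, hc⟩ := h2.exists_left_inv
  -- the two roots `(t ± u) / 2`
  have hsum : c * (t + u) + c * (t - u) = t := by linear_combination t * hc
  have hprod : d = c * (t + u) * (c * (t - u)) := by
    linear_combination (-d * (2 * c + 1)) * hc - c ^ 2 * hu
  have hunit : ∀ {r s : R}, r ∈ maximalIdeal R → r + s = t → IsUnit s := fun hr hrs =>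
    (isUnit_or_isUnit_of_isUnit_add (hrs ▸ ht)).resolve_left ((mem_maximalIdeal _).1 hr)
  rcases (maximalIdeal.isMaximal R).isPrime.mem_or_mem (hprod ▸ hd) with h | h
  · exact ⟨_, h, _, hunit h hsum, hsum.symm, hprod⟩
  · rw [add_comm] at hsum
    exact ⟨_, h, _, hunit h hsum, hsum.symm, hprod.trans (mul_comm _ _)⟩

variable {n : Type*} [Fintype n] [DecidableEq n]

theorem Matrix.isUnit_one_sub_of_forall_mem_maximalIdeal {B : Matrix n n R}
    (hB : ∀ i j, B i j ∈ maximalIdeal R) : IsUnit (1 - B) := by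
  rw [isUnit_iff_isUnit_det]
  refine isUnit_of_map_unit (residue R) _ ?_
  have : (residue R).mapMatrix (1 - B) = 1 := by
    ext i j
    simp [(residue_eq_zero_iff _).2 (hB i j), one_apply, apply_ite (residue R)]
  rw [RingHom.map_det, this, det_one]
  exact isUnit_one

theorem Matrix.forall_isUnit_one_sub_mul_iff {A : Matrix n n R} :
    (∀ y, IsUnit (1 - y * A)) ↔ ∀ i j, A i j ∈ maximalIdeal R := by
  refine ⟨fun h i j hij => ?_, fun h y => isUnit_one_sub_of_forall_mem_maximalIdeal
    fun i j => sum_mem fun k _ => Ideal.mul_mem_left _ _ (h k j)⟩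
  obtain ⟨c, hc⟩ := hij.exists_left_inv
  -- `y = c E_ji` makes the `j`-th column of `1 - yA` vanish
  have hcol : ∀ k, (1 - single j i c * A) k j = 0 := by
    intro k
    by_cases hk : k = j <;> simp [hk, hc]
  have := h (single j i c)
  rw [isUnit_iff_isUnit_det, det_eq_zero_of_column_eq_zero j hcol] at this
  exact not_isUnit_zero this

end LocalRing

theorem Matrix.mem_jacobson_of_memCornerJacobson_smul {R n : Type*} [CommRing R] [Fintype n]
    [DecidableEq n] {e : Matrix n n R} (he : IsIdempotentElem e) (ht : IsUnit e.trace) {l : R}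
    (h : MemCornerJacobson e (l • e)) : l ∈ Ideal.jacobson (⊥ : Ideal R) := by
  refine Ideal.mem_jacobson_bot.2 fun c => ?_
  obtain ⟨s, hs, hs', -⟩ := h ((-c) • 1)
  have hse : s * e = s := by rw [← hs, mul_assoc, he.eq]
  have : e - e * ((-c) • 1) * e * (l • e) = (l * c + 1) • e := by
    simp only [mul_one, smul_mul_assoc, mul_smul_comm, he.eq, smul_smul]
    module
  rw [this, mul_smul_comm, hse] at hs'
  have htr := congrArg trace hs'
  rw [trace_smul, smul_eq_mul] at htr
  exact isUnit_of_mul_isUnit_left (htr ▸ ht)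

section FinTwo

variable {R : Type*} [CommRing R]

theorem Matrix.mul_self_eq_trace_smul_sub_det_smul (M : Matrix (Fin 2) (Fin 2) R) :
    M * M = M.trace • M - M.det • 1 := by
  ext i j
  fin_cases i <;> fin_cases j <;>
    simp [mul_apply, trace_fin_two, det_fin_two] <;> ring

theorem Matrix.sub_smul_one_mul_sub_smul_one_eq_zero {A : Matrix (Fin 2) (Fin 2) R} {a b : R}
    (ht : A.trace = a + b) (hd : A.det = a * b) : (A - a • 1) * (A - b • 1) = 0 := by
  have := A.mul_self_eq_trace_smul_sub_det_smul
  rw [ht, hd] at this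
  simp only [sub_mul, mul_sub, smul_mul_assoc, mul_smul_comm, one_mul, mul_one, this]
  module

theorem Matrix.eq_zero_or_eq_one_or_trace_eq_one_and_det_eq_zero [IsLocalRing R]
    {e : Matrix (Fin 2) (Fin 2) R} (he : IsIdempotentElem e) :
    e = 0 ∨ e = 1 ∨ e.trace = 1 ∧ e.det = 0 := by
  have hdet : IsIdempotentElem e.det := by rw [IsIdempotentElem, ← det_mul, he.eq]
  rcases eq_zero_or_eq_one_of_isIdempotentElem hdet with hd | hd
  · have hte : e = e.trace • e := by
      simpa [hd, he.eq] using e.mul_self_eq_trace_smul_sub_det_smul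
    have htr : IsIdempotentElem e.trace := by
      simpa [IsIdempotentElem, eq_comm] using congrArg trace hte
    rcases eq_zero_or_eq_one_of_isIdempotentElem htr with ht | ht
    · exact .inl (by simpa [ht] using hte)
    · exact .inr (.inr ⟨ht, hd⟩)
  · exact .inr (.inl ((IsIdempotentElem.iff_eq_one_of_isUnit
      ((isUnit_iff_isUnit_det e).2 (hd ▸ isUnit_one))).1 he))

section RankOne

variable {e : Matrix (Fin 2) (Fin 2) R}

theorem Matrix.mul_mul_eq_trace_smul_of_trace_eq_one_of_det_eq_zero (ht : e.trace = 1)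
    (hd : e.det = 0) (X : Matrix (Fin 2) (Fin 2) R) : e * X * e = (e * X * e).trace • e := by
  rw [trace_fin_two] at ht
  rw [det_fin_two] at hd
  have h11 : e 1 1 = 1 - e 0 0 := by linear_combination ht
  have h : e 0 1 * e 1 0 - e 0 0 + e 0 0 ^ 2 = 0 := by
    rw [h11] at hd; linear_combination -hd
  ext i j
  fin_cases i <;> fin_cases j <;>
    simp only [Fin.zero_eta, Fin.mk_one, Fin.isValue, mul_apply, Fin.sum_univ_two, trace_fin_two,
      h11, smul_apply, smul_eq_mul]
  · linear_combination (X 1 1 * (1 - e 0 0) - X 0 0 * e 0 0) * h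
  · linear_combination (-(e 0 1 * X 0 0 + X 0 1 + e 0 1 * X 1 1)) * h
  · linear_combination (-(e 1 0 * X 0 0 + X 1 0 + e 1 0 * X 1 1)) * h
  · linear_combination (X 0 0 * e 0 0 - X 1 1 * (1 - e 0 0)) * h

theorem Matrix.det_smul_add_smul_one_sub_of_trace_eq_one_of_det_eq_zero (ht : e.trace = 1)
    (hd : e.det = 0) (x y : R) :
    (x • e + y • (1 - e)).det = x * y := by
  rw [trace_fin_two] at ht
  rw [det_fin_two] at hd
  simp only [det_fin_two, Fin.isValue, add_apply, smul_apply, smul_eq_mul, sub_apply, one_apply_eq,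
    one_apply_ne zero_ne_one, one_apply_ne one_ne_zero]
  linear_combination (x - y) ^ 2 * hd + (x * y - y ^ 2) * ht

theorem Matrix.trace_smul_add_smul_one_sub_of_trace_eq_one (ht : e.trace = 1) (x y : R) :
    (x • e + y • (1 - e)).trace = x + y := by
  simp only [trace_add, trace_smul, trace_sub, trace_one, Fintype.card_fin, Nat.cast_ofNat, ht,
    smul_eq_mul]
  ring

theorem Matrix.eq_smul_add_smul_one_sub_of_commute (ht : e.trace = 1) (hd : e.det = 0)
    (he : IsIdempotentElem e) {A : Matrix (Fin 2) (Fin 2) R} (hc : A * e = e * A) :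
    A = (e * A * e).trace • e + ((1 - e) * A * (1 - e)).trace • (1 - e) := by
  have htf : (1 - e).trace = 1 := by
    simpa using trace_smul_add_smul_one_sub_of_trace_eq_one ht 0 1
  have hdf : (1 - e).det = 0 := by
    simpa using det_smul_add_smul_one_sub_of_trace_eq_one_of_det_eq_zero ht hd 0 1
  have hcf : (1 - e) * A = A * (1 - e) := by simp [sub_mul, mul_sub, hc]
  calc A = A * e + A * (1 - e) := by rw [← mul_add, add_sub_cancel, mul_one]
    _ = e * A * e + (1 - e) * A * (1 - e) := by
      rw [← hc, hcf, mul_assoc, mul_assoc, he.eq, he.one_sub.eq]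
    _ = _ := congrArg₂ (· + ·) (mul_mul_eq_trace_smul_of_trace_eq_one_of_det_eq_zero ht hd A)
      (mul_mul_eq_trace_smul_of_trace_eq_one_of_det_eq_zero htf hdf A)

theorem Matrix.exists_mem_jacobson_isUnit_add_mul_of_trace_eq_one_of_det_eq_zero
    (ht : e.trace = 1) (hd : e.det = 0) (he : IsIdempotentElem e) {A : Matrix (Fin 2) (Fin 2) R}
    (hc : A * e = e * A) (hu : IsUnit (A - e)) (hJ : MemCornerJacobson e (e * A * e)) :
    ∃ a ∈ Ideal.jacobson (⊥ : Ideal R), ∃ b, IsUnit b ∧ A.trace = a + b ∧ A.det = a * b := by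
  obtain ⟨a, b, rfl⟩ : ∃ a b : R, A = a • e + b • (1 - e) :=
    ⟨_, _, eq_smul_add_smul_one_sub_of_commute ht hd he hc⟩
  have heAe : e * (a • e + b • (1 - e)) * e = a • e := by
    simp [mul_add, he.eq, he.mul_one_sub_self]
  have hue : a • e + b • (1 - e) - e = (a - 1) • e + b • (1 - e) := by module
  rw [hue, isUnit_iff_isUnit_det, det_smul_add_smul_one_sub_of_trace_eq_one_of_det_eq_zero ht hd]
    at hu
  refine ⟨a, mem_jacobson_of_memCornerJacobson_smul he (ht ▸ isUnit_one) (heAe ▸ hJ), b,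
    isUnit_of_mul_isUnit_right hu, ?_, ?_⟩
  · exact trace_smul_add_smul_one_sub_of_trace_eq_one ht a b
  · exact det_smul_add_smul_one_sub_of_trace_eq_one_of_det_eq_zero ht hd a b

end RankOne

end FinTwo

theorem stmt7 {R : Type*} [CommRing R] [IsLocalRing R] (h2 : IsUnit (2 : R))
    (A : Matrix (Fin 2) (Fin 2) R) :
    IsStronglyRadClean A ↔
      IsUnit A ∨ (∀ i j, A i j ∈ Ideal.jacobson (⊥ : Ideal R)) ∨
      (IsUnit A.trace ∧ A.det ∈ Ideal.jacobson (⊥ : Ideal R) ∧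
        ∃ u : R, A.trace ^ 2 - 4 * A.det = u ^ 2) := by
  have hJ : Ideal.jacobson (⊥ : Ideal R) = maximalIdeal R :=
    jacobson_eq_maximalIdeal ⊥ bot_ne_top
  rw [hJ, ← exists_mem_maximalIdeal_isUnit_add_mul_iff h2]
  constructor
  · rintro ⟨e, he, hu, hc, hcorner⟩
    rcases eq_zero_or_eq_one_or_trace_eq_one_and_det_eq_zero he with rfl | rfl | ⟨ht, hd⟩
    · exact .inl (by simpa using hu)
    · refine .inr (.inl (forall_isUnit_one_sub_mul_iff.1 ?_))
      simpa only [one_mul, mul_one, memCornerJacobson_one_iff] using hcorner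
    · exact .inr (.inr (hJ ▸
        exists_mem_jacobson_isUnit_add_mul_of_trace_eq_one_of_det_eq_zero ht hd he hc hu hcorner))
  · rintro (hA | hA | ⟨a, ha, b, hb, ht, hd⟩)
    · exact hA.isStronglyRadClean
    · exact isStronglyRadClean_of_forall_isUnit_one_sub_mul (forall_isUnit_one_sub_mul_iff.2 hA)
    · obtain ⟨e, he, rfl⟩ := exists_isIdempotentElem_eq_smul_add_smul_one_sub
        (sub_smul_one_mul_sub_smul_one_eq_zero ht hd)
        (by simpa [sub_eq_add_neg] using isUnit_add_of_mem_maximalIdeal ha hb.neg)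
      refine he.isStronglyRadClean_smul_add_smul_one_sub
        (by simpa [sub_eq_add_neg] using isUnit_add_of_mem_maximalIdeal ha isUnit_one.neg) hb
        fun x => isUnit_one_sub_of_forall_mem_maximalIdeal fun i j => ?_
      simpa using Ideal.mul_mem_right _ _ ha
end

section
/- Let R be a commutative local ring and A(x) ∈ M₂(R[[x]]). Then A(x) is strongly rad-clean in M₂(R[[x]]) if and only if A(0) is strongly rad-clean in M₂(R). -/
/-!
Reduction modulo `x`, `π : M₂(R⟦X⟧) → M₂(R)`, is surjective and reflects units (a matrix is
invertible iff the constant term of its determinant is), so strongly rad-clean decompositions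
push forward along `π`. Conversely, `j ∈ J(eSe)` amounts to the invertibility in `S` of all
`1 - eyej`, so the decomposition `A(0) = e + u` pulls back as soon as `e` lifts to an idempotent
`E` commuting with `A`.

For `e = 0, 1` this is trivial. Otherwise `e` has trace `1` and determinant `0` over the local
ring `R`, hence `A(0) = α e + δ (1 - e)` with `α` a non-unit (as `eA(0)e ∈ J(eM₂(R)e)`) and `δ` a
unit (as `A(0) - e` is invertible). So `α` is a simple root of the characteristic polynomial of
`A(0)`; Hensel's lemma in `R⟦X⟧` lifts it to an eigenvalue `λ` of `A`, and with `μ = tr A - λ`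
the spectral idempotent `(A - μ) / (λ - μ)` lifts `e`.
-/

section Ring
variable {S S' : Type*} [Ring S] [Ring S']

lemma memCornerJacobson_iff {e j : S} (he : IsIdempotentElem e) (hj : j * e = j) :
    MemCornerJacobson e j ↔ ∀ y, IsUnit (1 - e * y * e * j) := by
  refine forall_congr' fun y => ?_
  set c := e - e * y * e * j
  have hec : e * c = c := by simp only [c, mul_sub, ← mul_assoc, he.eq]
  have hce : c * e = c := by simp only [c, sub_mul, mul_assoc, hj, he.eq]
  have hu : 1 - e * y * e * j = c + (1 - e) := by simp only [c]; abel
  rw [hu]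
  constructor
  · rintro ⟨s, hs, hsc, hcs⟩
    have hes : e * s = s := by rw [← hs, ← mul_assoc, ← mul_assoc, he.eq]
    have hse : s * e = s := by rw [← hs, mul_assoc, he.eq]
    refine ⟨⟨c + (1 - e), s + (1 - e), ?_, ?_⟩, rfl⟩
    · simp only [add_mul, mul_add, mul_sub, sub_mul, mul_one, one_mul, hcs, hes, hce, he.eq]
      abel
    · simp only [add_mul, mul_add, mul_sub, sub_mul, mul_one, one_mul, hsc, hse, hec, he.eq]
      abel
  · rintro ⟨u, hu⟩
    have hue : (u : S) * e = c := by
      rw [hu, add_mul, hce, sub_mul, one_mul, he.eq, sub_self, add_zero]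
    have heu : e * (u : S) = c := by
      rw [hu, mul_add, hec, mul_sub, mul_one, he.eq, sub_self, add_zero]
    have hev : e * ↑u⁻¹ = ↑u⁻¹ * e := (Commute.units_inv_right (heu.trans hue.symm)).eq
    refine ⟨↑u⁻¹ * e, ?_, ?_, ?_⟩
    · rw [← mul_assoc, hev, mul_assoc, he.eq, mul_assoc, he.eq]
    · rw [mul_assoc, hec, ← hue, ← mul_assoc, Units.inv_mul, one_mul]
    · rw [← hue, mul_assoc, ← mul_assoc e, hev, mul_assoc, he.eq, ← mul_assoc, Units.mul_inv,
        one_mul]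

lemma MemCornerJacobson.map (φ : S →+* S') (hφ : Function.Surjective φ) {e j : S}
    (h : MemCornerJacobson e j) : MemCornerJacobson (φ e) (φ j) := by
  intro y
  obtain ⟨Y, rfl⟩ := hφ y
  obtain ⟨s, h1, h2, h3⟩ := h Y
  exact ⟨φ s, by simpa using congrArg φ h1, by simpa using congrArg φ h2,
    by simpa using congrArg φ h3⟩

lemma IsStronglyRadClean.map (φ : S →+* S') (hφ : Function.Surjective φ) {a : S}
    (h : IsStronglyRadClean a) : IsStronglyRadClean (φ a) := by
  obtain ⟨e, he, hu, hc, hj⟩ := h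
  exact ⟨φ e, he.map φ, by simpa using hu.map φ, by simpa using congrArg φ hc,
    by simpa using hj.map φ hφ⟩

lemma MemCornerJacobson.of_map (φ : S →+* S') [IsLocalHom φ] {e j : S}
    (he : IsIdempotentElem e) (hj : j * e = j) (h : MemCornerJacobson (φ e) (φ j)) :
    MemCornerJacobson e j := by
  rw [memCornerJacobson_iff (he.map φ) (by rw [← map_mul, hj])] at h
  rw [memCornerJacobson_iff he hj]
  exact fun y => (isUnit_map_iff φ _).mp (by simpa using h (φ y))

lemma IsStronglyRadClean.of_map (φ : S →+* S') [IsLocalHom φ] {a e : S}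
    (he : IsIdempotentElem e) (hae : a * e = e * a) (hu : IsUnit (φ a - φ e))
    (hJ : MemCornerJacobson (φ e) (φ e * φ a * φ e)) : IsStronglyRadClean a :=
  ⟨e, he, (isUnit_map_iff φ _).mp (by rwa [map_sub]), hae,
    .of_map φ he (by rw [mul_assoc, he.eq]) (by simpa only [map_mul] using hJ)⟩

end Ring

lemma isIdempotentElem_smul_sub_smul_one {K S : Type*} [CommRing K] [Ring S] [Algebra K S]
    {a : S} {l m w : K} (hw : w * (l - m) = 1) (h : (a - l • 1) * (a - m • 1) = 0) :
    IsIdempotentElem (w • (a - m • 1)) := by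
  have hsq : (a - m • 1) * (a - m • 1) = (l - m) • (a - m • 1) := by
    have hsplit : a - m • 1 = (a - l • 1) + (l - m) • (1 : S) := by rw [sub_smul]; abel
    nth_rewrite 1 [hsplit]
    rw [add_mul, h, zero_add, smul_one_mul]
  rw [IsIdempotentElem, smul_mul_smul_comm, hsq, smul_smul, mul_assoc, hw, mul_one]

instance RingHom.isLocalHom_mapMatrix {n R S : Type*} [Fintype n] [DecidableEq n] [CommRing R]
    [CommRing S] (f : R →+* S) [IsLocalHom f] :
    IsLocalHom (f.mapMatrix : Matrix n n R →+* Matrix n n S) :=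
  ⟨fun M hM => by
    rw [Matrix.isUnit_iff_isUnit_det, ← RingHom.map_det] at hM
    exact (Matrix.isUnit_iff_isUnit_det M).mpr (isUnit_of_map_unit f _ hM)⟩

lemma RingHom.mapMatrix_surjective {n R S : Type*} [Fintype n] [DecidableEq n] [Semiring R]
    [Semiring S] {f : R →+* S} (hf : Function.Surjective f) :
    Function.Surjective (f.mapMatrix : Matrix n n R →+* Matrix n n S) :=
  fun M => ⟨M.map (Function.surjInv hf), by ext; simp [Function.surjInv_eq hf]⟩

namespace Matrix
variable {R : Type*} [CommRing R]

lemma sub_smul_one_mul_sub_smul_one_eq_zero_of_isRoot_charpoly [Nontrivial R]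
    {A : Matrix (Fin 2) (Fin 2) R} {l : R} (h : A.charpoly.IsRoot l) :
    (A - l • 1) * (A - (A.trace - l) • 1) = 0 := by
  have hCH := A.aeval_self_charpoly
  rw [charpoly_fin_two] at hCH h
  simp only [map_add, Polynomial.aeval_sub, map_pow, Polynomial.aeval_X, map_mul,
    Polynomial.aeval_C, Algebra.algebraMap_eq_smul_one, Algebra.smul_mul_assoc, one_mul,
    Polynomial.IsRoot, Polynomial.eval_add, Polynomial.eval_sub, Polynomial.eval_pow,
    Polynomial.eval_X, Polynomial.eval_mul, Polynomial.eval_C] at hCH h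
  have hdet : A.det = l * (A.trace - l) := by linear_combination h
  rw [hdet] at hCH
  rw [← hCH]
  simp only [sub_mul, mul_sub, one_mul, mul_one, smul_mul_assoc, mul_smul_comm, sq]
  module

lemma mul_mul_eq_trace_smul_of_det_eq_zero {e : Matrix (Fin 2) (Fin 2) R} (he : e.det = 0)
    (X : Matrix (Fin 2) (Fin 2) R) : e * X * e = (X * e).trace • e := by
  rw [det_fin_two] at he
  ext i j
  fin_cases i <;> fin_cases j <;>
    simp only [Fin.zero_eta, Fin.mk_one, Fin.isValue, mul_apply, Fin.sum_univ_two, trace_fin_two,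
      smul_apply, smul_eq_mul]
  · linear_combination (-X 1 1) * he
  · linear_combination (X 0 1) * he
  · linear_combination (X 1 0) * he
  · linear_combination (-X 0 0) * he

lemma det_one_sub_fin_two (e : Matrix (Fin 2) (Fin 2) R) : (1 - e).det = 1 - e.trace + e.det := by
  simp only [det_fin_two, trace_fin_two, sub_apply, one_apply_eq, one_apply_ne, ne_eq,
    Fin.isValue, zero_ne_one, not_false_eq_true, one_ne_zero]
  ring

section IsLocalRing
variable [IsLocalRing R]

lemma det_eq_zero_of_isIdempotentElem {n : Type*} [Fintype n] [DecidableEq n]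
    {e : Matrix n n R} (he : IsIdempotentElem e) (h1 : e ≠ 1) : e.det = 0 := by
  have hd : IsIdempotentElem e.det := by rw [IsIdempotentElem, ← det_mul, he.eq]
  rcases IsLocalRing.isUnit_or_isUnit_one_sub_self e.det with hu | hu
  · exact absurd ((IsIdempotentElem.iff_eq_one_of_isUnit ((isUnit_iff_isUnit_det e).mpr hu)).mp he)
      h1
  · exact (hu.mul_right_eq_zero).mp hd.one_sub_mul_self

lemma det_one_sub_eq_zero_of_isIdempotentElem {n : Type*} [Fintype n] [DecidableEq n]
    {e : Matrix n n R} (he : IsIdempotentElem e) (h0 : e ≠ 0) : (1 - e).det = 0 :=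
  det_eq_zero_of_isIdempotentElem he.one_sub (by simpa [sub_eq_self] using h0)

lemma trace_eq_one_of_isIdempotentElem {e : Matrix (Fin 2) (Fin 2) R} (he : IsIdempotentElem e)
    (h0 : e ≠ 0) (h1 : e ≠ 1) : e.trace = 1 := by
  have h := det_one_sub_eq_zero_of_isIdempotentElem he h0
  rw [det_one_sub_fin_two, det_eq_zero_of_isIdempotentElem he h1] at h
  linear_combination -h

lemma eq_trace_smul_add_trace_smul_of_commute {e B : Matrix (Fin 2) (Fin 2) R}
    (he : IsIdempotentElem e) (h0 : e ≠ 0) (h1 : e ≠ 1) (hB : B * e = e * B) :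
    B = (B * e).trace • e + (B * (1 - e)).trace • (1 - e) := by
  have hB' : (1 - e) * B = B * (1 - e) := by simp only [sub_mul, mul_sub, one_mul, mul_one, hB]
  rw [← mul_mul_eq_trace_smul_of_det_eq_zero (det_eq_zero_of_isIdempotentElem he h1),
    ← mul_mul_eq_trace_smul_of_det_eq_zero
      (det_one_sub_eq_zero_of_isIdempotentElem he h0),
    ← hB, hB', mul_assoc, he.eq, mul_assoc, he.one_sub.eq, ← mul_add, add_sub_cancel, mul_one]

lemma not_isUnit_trace_mul_of_memCornerJacobson {e B : Matrix (Fin 2) (Fin 2) R}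
    (he : IsIdempotentElem e) (h0 : e ≠ 0) (h1 : e ≠ 1) (hJ : MemCornerJacobson e (e * B * e)) :
    ¬IsUnit (B * e).trace := by
  intro hα
  obtain ⟨s, -, hs, -⟩ := hJ (((hα.unit⁻¹ : Rˣ) : R) • 1)
  rw [mul_mul_eq_trace_smul_of_det_eq_zero (det_eq_zero_of_isIdempotentElem he h1) B] at hs
  simp only [mul_smul_comm, smul_mul_assoc, mul_one, he.eq, smul_smul, hα.mul_val_inv, one_smul,
    sub_self, mul_zero] at hs
  exact h0 hs.symm

lemma isUnit_trace_mul_one_sub_of_isUnit_sub {e B : Matrix (Fin 2) (Fin 2) R}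
    (he : IsIdempotentElem e) (h0 : e ≠ 0) (h1 : e ≠ 1) (hB : B * e = e * B)
    (hu : IsUnit (B - e)) : IsUnit (B * (1 - e)).trace := by
  obtain ⟨v, hv⟩ := hu.exists_right_inv
  have hB' : (1 - e) * B = B * (1 - e) := by simp only [sub_mul, mul_sub, one_mul, mul_one, hB]
  have hcorner : (1 - e) * (B - e) = (B * (1 - e)).trace • (1 - e) := by
    rw [← mul_mul_eq_trace_smul_of_det_eq_zero
      (det_one_sub_eq_zero_of_isIdempotentElem he h0)]
    rw [mul_sub, he.one_sub_mul_self, sub_zero, hB', mul_assoc, he.one_sub.eq]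
  have htr : (1 - e).trace = 1 := by
    rw [trace_sub, trace_eq_one_of_isIdempotentElem he h0 h1, trace_one]
    norm_num
  refine IsUnit.of_mul_eq_one ((1 - e) * v).trace ?_
  rw [← smul_eq_mul, ← trace_smul, ← smul_mul_assoc, ← hcorner, mul_assoc, hv, mul_one, htr]

lemma isUnit_trace_mul_sub_trace_mul_one_sub {e B : Matrix (Fin 2) (Fin 2) R}
    (he : IsIdempotentElem e) (h0 : e ≠ 0) (h1 : e ≠ 1) (hB : B * e = e * B)
    (hu : IsUnit (B - e)) (hJ : MemCornerJacobson e (e * B * e)) :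
    IsUnit ((B * e).trace - (B * (1 - e)).trace) := by
  have hα := not_isUnit_trace_mul_of_memCornerJacobson he h0 h1 hJ
  have hδ := isUnit_trace_mul_one_sub_of_isUnit_sub he h0 h1 hB hu
  refine (IsLocalRing.isUnit_or_isUnit_of_isUnit_add (b := -(B * e).trace) ?_).resolve_right
    (fun h => hα (by simpa using h.neg))
  rw [show (B * e).trace - (B * (1 - e)).trace + -(B * e).trace = -(B * (1 - e)).trace by ring]
  exact hδ.neg

end IsLocalRing

end Matrix

namespace PowerSeries
open Matrix
variable {R : Type*} [CommRing R]

instance isLocalHom_constantCoeff : IsLocalHom (constantCoeff : R⟦X⟧ →+* R) :=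
  ⟨fun _ => isUnit_iff_constantCoeff.mpr⟩

lemma exists_isRoot_constantCoeff_eq {f : Polynomial R⟦X⟧} (hf : f.Monic) {α : R}
    (hα : (f.map constantCoeff).IsRoot α)
    (hα' : IsUnit ((f.map constantCoeff).derivative.eval α)) :
    ∃ l : R⟦X⟧, f.IsRoot l ∧ constantCoeff l = α := by
  have hC : ∀ g : Polynomial R⟦X⟧,
      constantCoeff (g.eval (C α)) = (g.map constantCoeff).eval α :=
    fun g => by rw [← Polynomial.eval_map_apply, constantCoeff_C]
  obtain ⟨l, hl, hlα⟩ := HenselianRing.is_henselian f hf (C α)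
    (Ideal.mem_span_singleton.mpr (X_dvd_iff.mpr (by rw [hC]; exact hα)))
    ((isUnit_iff_constantCoeff.mpr (by rw [hC, ← Polynomial.derivative_map]; exact hα')).map _)
  refine ⟨l, hl, ?_⟩
  rw [Ideal.mem_span_singleton, X_dvd_iff, map_sub, constantCoeff_C, sub_eq_zero] at hlα
  exact hlα

lemma exists_isIdempotentElem_commute_map_eq_of_map_eq_smul_add_smul [Nontrivial R]
    (A : Matrix (Fin 2) (Fin 2) R⟦X⟧) {e : Matrix (Fin 2) (Fin 2) R} {α δ : R}
    (htr : e.trace = 1) (hdet : (1 - e).det = 0)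
    (hA : A.map constantCoeff = α • e + δ • (1 - e)) (hαδ : IsUnit (α - δ)) :
    ∃ E, IsIdempotentElem E ∧ A * E = E * A ∧ E.map constantCoeff = e := by
  have htrA : constantCoeff A.trace = α + δ := by
    rw [AddMonoidHom.map_trace, hA, trace_add, trace_smul, trace_smul, trace_sub, htr, trace_one]
    simp only [Fintype.card_fin, smul_eq_mul]
    ring
  have hroot : (A.map constantCoeff).charpoly.IsRoot α := by
    rw [Polynomial.IsRoot, eval_charpoly, hA, scalar_apply, ← smul_one_eq_diagonal,
      show α • (1 : Matrix (Fin 2) (Fin 2) R) - (α • e + δ • (1 - e)) = (α - δ) • (1 - e) by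
        module, det_smul, hdet, mul_zero]
  have hderiv : (A.map constantCoeff).charpoly.derivative.eval α = α - δ := by
    rw [charpoly_fin_two, ← AddMonoidHom.map_trace, htrA]
    simp only [map_add, Polynomial.derivative_sub,
      Polynomial.derivative_X_pow_succ, Nat.cast_one, map_one, pow_one, Polynomial.derivative_mul,
      Polynomial.derivative_C, add_zero, zero_mul, Polynomial.derivative_X, mul_one, zero_add,
      Polynomial.eval_sub, Polynomial.eval_mul, Polynomial.eval_add, Polynomial.eval_one,
      Polynomial.eval_X, Polynomial.eval_C]
    ring
  obtain ⟨l, hl, hl0⟩ := exists_isRoot_constantCoeff_eq A.charpoly_monic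
    (by rwa [← charpoly_map]) (by rw [← charpoly_map, hderiv]; exact hαδ)
  have hm0 : constantCoeff (A.trace - l) = δ := by rw [map_sub, htrA, hl0]; ring
  obtain ⟨w, hw⟩ := (isUnit_iff_constantCoeff.mpr
    (by rw [map_sub, hl0, hm0]; exact hαδ) : IsUnit (l - (A.trace - l))).exists_left_inv
  refine ⟨w • (A - (A.trace - l) • 1), isIdempotentElem_smul_sub_smul_one hw
    (sub_smul_one_mul_sub_smul_one_eq_zero_of_isRoot_charpoly hl), ?_, ?_⟩
  · simp only [mul_smul_comm, smul_mul_assoc, mul_sub, sub_mul, mul_one, one_mul]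
  · have hw0 : constantCoeff w * (α - δ) = 1 := by
      rw [← hl0, ← hm0, ← map_sub, ← map_mul, hw, map_one]
    have hmap : (w • (A - (A.trace - l) • 1)).map constantCoeff
        = constantCoeff w • (A.map constantCoeff - δ • 1) := by
      ext i j
      simp [Matrix.one_apply, apply_ite constantCoeff, hm0]
    rw [hmap, hA, show α • e + δ • (1 - e) - δ • 1 = (α - δ) • e by module, smul_smul, hw0,
      one_smul]

lemma exists_isIdempotentElem_commute_map_eq [IsLocalRing R]
    (A : Matrix (Fin 2) (Fin 2) R⟦X⟧) {e : Matrix (Fin 2) (Fin 2) R} (he : IsIdempotentElem e)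
    (hAe : A.map constantCoeff * e = e * A.map constantCoeff)
    (hu : IsUnit (A.map constantCoeff - e))
    (hJ : MemCornerJacobson e (e * A.map constantCoeff * e)) :
    ∃ E, IsIdempotentElem E ∧ A * E = E * A ∧ E.map constantCoeff = e := by
  by_cases h0 : e = 0
  · exact ⟨0, .zero, by simp, h0 ▸ Matrix.map_zero _ (map_zero _)⟩
  by_cases h1 : e = 1
  · exact ⟨1, .one, by simp, h1 ▸ Matrix.map_one _ (map_zero _) (map_one _)⟩
  exact exists_isIdempotentElem_commute_map_eq_of_map_eq_smul_add_smul A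
    (trace_eq_one_of_isIdempotentElem he h0 h1) (det_one_sub_eq_zero_of_isIdempotentElem he h0)
    (eq_trace_smul_add_trace_smul_of_commute he h0 h1 hAe)
    (isUnit_trace_mul_sub_trace_mul_one_sub he h0 h1 hAe hu hJ)

end PowerSeries

theorem stmt18 {R : Type*} [CommRing R] [IsLocalRing R]
    (A : Matrix (Fin 2) (Fin 2) (PowerSeries R)) :
    IsStronglyRadClean A ↔ IsStronglyRadClean (A.map (PowerSeries.constantCoeff : PowerSeries R →+* R)) := by
  refine ⟨fun h => h.map _ (RingHom.mapMatrix_surjective fun r =>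
      ⟨PowerSeries.C r, PowerSeries.constantCoeff_C r⟩), fun ⟨e, he, hu, hAe, hJ⟩ => ?_⟩
  obtain ⟨E, hE, hAE, rfl⟩ := PowerSeries.exists_isIdempotentElem_commute_map_eq A he hAe hu hJ
  exact .of_map (PowerSeries.constantCoeff : PowerSeries R →+* R).mapMatrix hE hAE hu hJ
end
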